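/- arXiv:2211.12456 — 4 statements merged into one kernel-verified Lean document; each statement's English description precedes it below -/
import Mathlib

section
/- If a clause C = p ∨ C' is a blocked clause for literal p with respect to a CNF Γ (i.e., for every clause D of the form ¬p ∨ D' in Γ, the set C' ∪ D' contains a complementary pair of literals), then Γ and Γ ∪ {C} are equisatisfiable. -/
open Classical

abbrev Var := ℕ
abbrev Lit := Var × Bool

def negLit (l : Lit) : Lit := (l.1, !l.2)

abbrev Clause := Finset Lit

/-- A set of literals is tautological if it contains a complementary pair. -/
def Tauto (S : Finset Lit) : Prop := ∃ l ∈ S, negLit l ∈ S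

abbrev CNF := Set Clause

abbrev Assign := Var → Bool

def SatLit (α : Assign) (l : Lit) : Prop := α l.1 = l.2
def SatClause (α : Assign) (C : Clause) : Prop := ∃ l ∈ C, SatLit α l
def SatCNF (α : Assign) (Γ : CNF) : Prop := ∀ C ∈ Γ, SatClause α C
def Satisfiable (Γ : CNF) : Prop := ∃ α, SatCNF α Γ
def Equisat (Γ Δ : CNF) : Prop := Satisfiable Γ ↔ Satisfiable Δ

/-- `C` is a blocked clause for the literal `p` with respect to `Γ`. -/
def Blocked (C : Clause) (p : Lit) (Γ : CNF) : Prop :=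
  p ∈ C ∧ ∀ D ∈ Γ, negLit p ∈ D → Tauto (C.erase p ∪ D.erase (negLit p))

def negSet (L : Finset Lit) : Finset Lit := L.image negLit

/-- `C` is a set-blocked clause for `L` with respect to `Γ`. -/
def SetBlocked (C : Clause) (L : Finset Lit) (Γ : CNF) : Prop :=
  L.Nonempty ∧ L ⊆ C ∧
    ∀ D ∈ Γ, (D ∩ negSet L).Nonempty → D ∩ L = ∅ →
      Tauto ((C \ L) ∪ (D \ negSet L))

def varsClause (C : Clause) : Finset Var := C.image Prod.fst
def varsCNF (Γ : CNF) : Set Var := {v | ∃ C ∈ Γ, v ∈ varsClause C}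

/-- Partial assignments. -/
abbrev PAssign := Var → Option Bool

def restrictClause (α : PAssign) (C : Clause) : Clause :=
  C.filter fun l => α l.1 ≠ some (!l.2)

def PSatClause' (α : PAssign) (C : Clause) : Prop := ∃ l ∈ C, α l.1 = some l.2

def restrictCNF (α : PAssign) (Γ : CNF) : CNF :=
  {E | ∃ C ∈ Γ, ¬ PSatClause' α C ∧ E = restrictClause α C}

/-- `E` is a resolvent of `F` and `G`. -/
def Resolvent (E F G : Clause) : Prop :=
  ∃ (x : Var) (A B : Clause), x ∉ varsClause A ∧ x ∉ varsClause B ∧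
    F = insert (x, true) A ∧ G = insert (x, false) B ∧
    E = A ∪ B ∧ ¬ Tauto (A ∪ B)

/-- One step of a resolution proof: add a resolvent or a weakening. -/
def ResStep (Γ Γ' : CNF) : Prop :=
  ∃ C, Γ' = Γ ∪ {C} ∧
    ((∃ F ∈ Γ, ∃ G ∈ Γ, Resolvent C F G) ∨ (∃ D ∈ Γ, D ⊆ C ∧ ¬ Tauto C))

/-- A resolution proof (refutation) of `Γ`. -/
def ResProofOf (Γ : CNF) (prf : List CNF) : Prop :=
  prf.head? = some Γ ∧ (∃ Δ, prf.getLast? = some Δ ∧ (∅ : Clause) ∈ Δ) ∧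
    List.Chain' ResStep prf

/-- One step of a unit propagation proof: resolve against a unit clause, or weaken. -/
def UnitStep (Γ Γ' : CNF) : Prop :=
  ∃ C, Γ' = Γ ∪ {C} ∧
    ((∃ l, ({negLit l} : Clause) ∈ Γ ∧ l.1 ∉ varsClause C ∧ insert l C ∈ Γ)
      ∨ (∃ D ∈ Γ, D ⊆ C ∧ ¬ Tauto C))

/-- `Γ` has a unit propagation refutation. -/
def UPRefutes (Γ : CNF) : Prop :=
  ∃ prf : List CNF, prf.head? = some Γ ∧ (∃ Δ, prf.getLast? = some Δ ∧ (∅ : Clause) ∈ Δ) ∧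
    List.Chain' UnitStep prf

def negUnits (L : Finset Lit) : CNF := {C | ∃ p ∈ L, C = {negLit p}}

/-- `Γ ⊢₁ C`. -/
def UPDerives (Γ : CNF) (C : Clause) : Prop := UPRefutes (Γ ∪ negUnits C)

/-- Partial assignments as consistent sets of literals. -/
def Consistent (α : Set Lit) : Prop := ∀ l ∈ α, negLit l ∉ α
def PSatClause (α : Set Lit) (C : Clause) : Prop := ∃ l ∈ C, l ∈ α
def PSatCNF (α : Set Lit) (Γ : CNF) : Prop := ∀ C ∈ Γ, PSatClause α C
def MinSat (α : Set Lit) (Γ : CNF) : Prop :=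
  Consistent α ∧ PSatCNF α Γ ∧ ∀ β ⊂ α, ¬ PSatCNF β Γ

/-- `μ(Γ)`: clauses whose negation minimally satisfies `Γ`. -/
def mu (Γ : CNF) : CNF := {E | MinSat (↑(E.image negLit)) Γ}

/-- Projection of `Γ` onto a literal. -/
def proj (p : Lit) (Γ : CNF) : CNF := {E | ∃ D ∈ Γ, p ∈ D ∧ E = D.erase p}

/-!
If `α` satisfies `Γ` but not `C`, flip `α` at the variable of `p`. The new assignment satisfies
`C` through `p` and still falsifies every other literal of `C`. A clause `D ∈ Γ` that loses its
only true literal under the flip must contain `¬p`, so by blockedness `C \ {p}` and `D \ {¬p}`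
share a complementary pair; the true member of that pair cannot lie in `C \ {p}`, hence lies in `D`.
-/

open Function

theorem satLit_negLit {α : Assign} {l : Lit} : SatLit α (negLit l) ↔ ¬ SatLit α l := by
  cases h : α l.1 <;> cases l.2 <;> simp_all [SatLit, negLit]

theorem Tauto.satClause {α : Assign} {S : Finset Lit} (h : Tauto S) : SatClause α S := by
  obtain ⟨l, hl, hnl⟩ := h
  by_cases hsat : SatLit α l
  · exact ⟨l, hl, hsat⟩
  · exact ⟨negLit l, hnl, satLit_negLit.mpr hsat⟩

theorem Satisfiable.mono {Γ Δ : CNF} (h : Γ ⊆ Δ) : Satisfiable Δ → Satisfiable Γ :=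
  fun ⟨α, hα⟩ => ⟨α, fun D hD => hα D (h hD)⟩

theorem satLit_update_self (α : Assign) (p : Lit) : SatLit (update α p.1 p.2) p := by
  simp [SatLit]

theorem satLit_update_of_ne {α : Assign} {p r : Lit} (h : r.1 ≠ p.1) :
    SatLit (update α p.1 p.2) r ↔ SatLit α r := by
  simp [SatLit, update_of_ne h]

theorem eq_of_not_satLit_of_fst_eq {α : Assign} {p r : Lit} (hp : ¬ SatLit α p)
    (hr : ¬ SatLit α r) (h : r.1 = p.1) : r = p := by
  unfold SatLit at hp hr
  rw [h] at hr
  refine Prod.ext h ?_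
  revert hp hr
  cases α p.1 <;> cases r.2 <;> cases p.2 <;> decide

section Flip

variable {α : Assign} {Γ : CNF} {C : Clause} {p : Lit}

theorem not_satLit_update_of_mem_erase (hp : p ∈ C) (hα : ¬ SatClause α C) {r : Lit}
    (hr : r ∈ C.erase p) : ¬ SatLit (update α p.1 p.2) r := by
  have hfalse : ∀ l ∈ C, ¬ SatLit α l := fun l hl hsat => hα ⟨l, hl, hsat⟩
  obtain ⟨hrp, hrC⟩ := Finset.mem_erase.mp hr
  have hvar : r.1 ≠ p.1 := fun h =>
    hrp (eq_of_not_satLit_of_fst_eq (hfalse p hp) (hfalse r hrC) h)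
  rw [satLit_update_of_ne hvar]
  exact hfalse r hrC

theorem satClause_update_of_blocked (hp : p ∈ C) (hα : ¬ SatClause α C) {D : Clause}
    (hD : SatClause α D) (hres : negLit p ∈ D → Tauto (C.erase p ∪ D.erase (negLit p))) :
    SatClause (update α p.1 p.2) D := by
  obtain ⟨l, hlD, hl⟩ := hD
  by_cases hvar : l.1 = p.1
  · have hlp : l = negLit p := by
      have hnp : ¬ SatLit α (negLit l) := fun h => satLit_negLit.mp h hl
      have := eq_of_not_satLit_of_fst_eq (fun h => hα ⟨p, hp, h⟩) hnp hvar
      rw [← this]; simp [negLit]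
    obtain ⟨t, ht, htrue⟩ := (hres (hlp ▸ hlD)).satClause (α := update α p.1 p.2)
    rcases Finset.mem_union.mp ht with htC | htD
    · exact absurd htrue (not_satLit_update_of_mem_erase hp hα htC)
    · exact ⟨t, Finset.mem_of_mem_erase htD, htrue⟩
  · exact ⟨l, hlD, (satLit_update_of_ne hvar).mpr hl⟩

theorem satCNF_update_of_blocked (hb : Blocked C p Γ) (hα : SatCNF α Γ)
    (hαC : ¬ SatClause α C) : SatCNF (update α p.1 p.2) (Γ ∪ {C}) := by
  rintro D (hD | rfl)
  · exact satClause_update_of_blocked hb.1 hαC (hα D hD) (hb.2 D hD)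
  · exact ⟨p, hb.1, satLit_update_self α p⟩

theorem Blocked.satisfiable_union (hb : Blocked C p Γ)
    (hΓ : Satisfiable Γ) : Satisfiable (Γ ∪ {C}) := by
  obtain ⟨α, hα⟩ := hΓ
  by_cases hαC : SatClause α C
  · exact ⟨α, fun D hD => hD.elim (hα D) fun hDC => hDC ▸ hαC⟩
  · exact ⟨_, satCNF_update_of_blocked hb hα hαC⟩

end Flip

theorem blocked_equisat_general (Γ : CNF) (C : Clause) (p : Lit)
    (hb : Blocked C p Γ) :
    Equisat Γ (Γ ∪ {C}) :=
  ⟨hb.satisfiable_union, Satisfiable.mono Set.subset_union_left⟩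

/-- blocked clauses are redundant. -/
theorem blocked_equisat (Γ : CNF) (C : Clause) (p : Lit)
    (hC : ¬ Tauto C) (hΓ : ∀ D ∈ Γ, ¬ Tauto D)
    (hb : Blocked C p Γ) :
    Equisat Γ (Γ ∪ {C}) :=
  blocked_equisat_general Γ C p hb
end

section
/- A clause is blocked for a literal p with respect to a CNF Γ if and only if it is set-blocked for the singleton {p} with respect to Γ; i.e., every blocked clause is a set-blocked clause. -/
open Classical

lemma negSet_singleton (l : Lit) : negSet {l} = {negLit l} :=
  Finset.image_singleton negLit l

lemma setBlocked_singleton_iff (C : Clause) (p : Lit) (Γ : CNF) :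
    SetBlocked C {p} Γ ↔
      p ∈ C ∧ ∀ D ∈ Γ, negLit p ∈ D → p ∉ D → Tauto (C.erase p ∪ D.erase (negLit p)) := by
  simp only [SetBlocked, negSet_singleton, Finset.singleton_nonempty, Finset.singleton_subset_iff,
    Finset.sdiff_singleton_eq_erase, ← Finset.not_disjoint_iff_nonempty_inter,
    ← Finset.disjoint_iff_inter_eq_empty, Finset.disjoint_singleton_right, not_not, true_and]

/-- blocked for `p` iff set-blocked for `{p}`. -/
theorem blocked_iff_setBlocked_singleton (Γ : CNF) (C : Clause) (p : Lit)
    (hΓ : ∀ D ∈ Γ, ¬ Tauto D) :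
    Blocked C p Γ ↔ SetBlocked C {p} Γ := by
  rw [setBlocked_singleton_iff]
  refine and_congr_right fun _ => forall₂_congr fun D hD => ?_
  exact ⟨fun h hn _ => h hn, fun h hn => h hn fun hp => hΓ D hD ⟨p, hp, hn⟩⟩
end

section
/- A clause C = p ∨ C' (with p not occurring in C') is a blocked clause for p with respect to a CNF Γ if and only if the partial assignment falsifying exactly the literals of C' satisfies the projection of Γ onto ¬p, where the projection proj_{¬p}(Γ) := { D \ {¬p} : D ∈ Γ, ¬p ∈ D }. -/
open Classical

/-! Since neither `C'` nor `D` is tautological, a complementary pair in `C' ∪ (D \ {¬p})` must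
have one literal on each side, i.e. `D \ {¬p}` contains the negation of a literal of `C'`, which
is exactly a literal made true by the assignment `¬C'`. -/

@[simp] theorem negLit_negLit (l : Lit) : negLit (negLit l) = l := by
  simp [negLit]

theorem mem_image_negLit {A : Finset Lit} {l : Lit} : l ∈ A.image negLit ↔ negLit l ∈ A := by
  constructor
  · intro h
    obtain ⟨m, hm, rfl⟩ := Finset.mem_image.1 h
    simpa using hm
  · intro h
    exact Finset.mem_image.2 ⟨negLit l, h, negLit_negLit l⟩

theorem Tauto.mono {A B : Finset Lit} (hAB : A ⊆ B) (hA : Tauto A) : Tauto B := by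
  obtain ⟨l, hl, hnl⟩ := hA
  exact ⟨l, hAB hl, hAB hnl⟩

theorem psatClause_image_negLit_iff {A E : Finset Lit} :
    PSatClause ↑(A.image negLit) E ↔ ∃ l ∈ E, negLit l ∈ A := by
  simp only [PSatClause, Finset.mem_coe, mem_image_negLit]

theorem tauto_union_iff {A B : Finset Lit} (hA : ¬ Tauto A) (hB : ¬ Tauto B) :
    Tauto (A ∪ B) ↔ ∃ l ∈ B, negLit l ∈ A := by
  constructor
  · rintro ⟨l, hl, hnl⟩
    rw [Finset.mem_union] at hl hnl
    rcases hl with hlA | hlB <;> rcases hnl with hnlA | hnlB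
    · exact absurd ⟨l, hlA, hnlA⟩ hA
    · exact ⟨negLit l, hnlB, by simpa using hlA⟩
    · exact ⟨l, hlB, hnlA⟩
    · exact absurd ⟨l, hlB, hnlB⟩ hB
  · rintro ⟨l, hl, hnl⟩
    exact ⟨l, Finset.mem_union_right _ hl, Finset.mem_union_left _ hnl⟩

theorem blocked_insert_iff {Γ : CNF} {C' : Clause} {p : Lit} (hp : p ∉ C') :
    Blocked (insert p C') p Γ ↔ ∀ D ∈ Γ, negLit p ∈ D → Tauto (C' ∪ D.erase (negLit p)) := by
  simp only [Blocked, Finset.mem_insert_self, Finset.erase_insert hp, true_and]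

theorem blocked_iff_proj_sat_general (Γ : CNF) (C' : Clause) (p : Lit)
    (hΓ : ∀ D ∈ Γ, ¬ Tauto D) (hC' : ¬ Tauto C')
    (hp : p ∉ C') :
    Blocked (insert p C') p Γ ↔ PSatCNF (↑(C'.image negLit)) (proj (negLit p) Γ) := by
  rw [blocked_insert_iff hp]
  constructor
  · rintro hblocked E ⟨D, hD, hnp, rfl⟩
    have hE : ¬ Tauto (D.erase (negLit p)) :=
      fun h => hΓ D hD (h.mono (Finset.erase_subset _ _))
    exact psatClause_image_negLit_iff.2 ((tauto_union_iff hC' hE).1 (hblocked D hD hnp))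
  · intro hsat D hD hnp
    obtain ⟨l, hl, hnl⟩ := psatClause_image_negLit_iff.1 (hsat _ ⟨D, hD, hnp, rfl⟩)
    exact ⟨l, Finset.mem_union_right _ hl, Finset.mem_union_left _ hnl⟩

/-- `C = p ∨ C'` is blocked for `p` w.r.t. `Γ` iff the assignment `¬C'`
satisfies the projection of `Γ` onto `¬p`. -/
theorem blocked_iff_proj_sat (Γ : CNF) (C' : Clause) (p : Lit)
    (hΓ : ∀ D ∈ Γ, ¬ Tauto D) (hC' : ¬ Tauto C')
    (hp : p ∉ C') (hpn : negLit p ∉ C') :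
    Blocked (insert p C') p Γ ↔ PSatCNF (↑(C'.image negLit)) (proj (negLit p) Γ) :=
  blocked_iff_proj_sat_general Γ C' p hΓ hC' hp
end

section
/- Unit propagation is preserved under restrictions: for every CNF Γ, every set of literals L, and every partial assignment α that does not satisfy any literal of L, if Γ ∧ ¬L has a unit propagation refutation, then Γ|α ∧ ¬(L|α) has a unit propagation refutation, where L|α = L \ { q : α(q) = 0 }. -/
open Classical

/-!
Replay a unit-propagation derivation from `Γ ∧ ¬L` under `α`. A derived clause `C` that `α`
does not satisfy has a subclause of `C|α` derivable from `Γ|α ∧ ¬(L|α)`: in a unit step at most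
one premise is satisfied, and passing to subclauses absorbs the cases where restriction empties
the unit `¬l` or deletes the resolved literal `l`. For `C = ∅` this is the required refutation.
-/

open Relation

inductive UnitDerivable (Γ : CNF) : Clause → Prop where
  | base {C : Clause} : C ∈ Γ → UnitDerivable Γ C
  | unit {l : Lit} {C : Clause} : UnitDerivable Γ {negLit l} → UnitDerivable Γ (insert l C) →
      l.1 ∉ varsClause C → UnitDerivable Γ C
  | weak {D C : Clause} : UnitDerivable Γ D → D ⊆ C → ¬ Tauto C → UnitDerivable Γ C

theorem UnitStep.subset {Γ Γ' : CNF} (h : UnitStep Γ Γ') : Γ ⊆ Γ' := by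
  obtain ⟨C, rfl, -⟩ := h
  exact Set.subset_union_left

theorem subset_of_reflTransGen_unitStep {Γ Δ : CNF} (h : ReflTransGen UnitStep Γ Δ) : Γ ⊆ Δ := by
  induction h with
  | refl => exact subset_rfl
  | tail _ hstep ih => exact ih.trans hstep.subset

theorem upRefutes_iff_exists_reflTransGen {Γ : CNF} :
    UPRefutes Γ ↔ ∃ Δ, ReflTransGen UnitStep Γ Δ ∧ (∅ : Clause) ∈ Δ := by
  constructor
  · rintro ⟨_ | ⟨Γ₀, prf⟩, hhead, ⟨Δ, hlast, hΔ⟩, hchain⟩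
    · simp at hhead
    obtain rfl : Γ₀ = Γ := by simpa using hhead
    exact ⟨Δ, List.relationReflTransGen_of_exists_isChain_cons prf hchain
      (by simpa [List.getLast?_eq_some_getLast] using hlast), hΔ⟩
  · rintro ⟨Δ, hreach, hΔ⟩
    obtain ⟨prf, hchain, hlast⟩ := List.exists_isChain_cons_of_relationReflTransGen hreach
    exact ⟨Γ :: prf, rfl, ⟨Δ, by simp [List.getLast?_eq_some_getLast, hlast], hΔ⟩, hchain⟩

namespace UnitDerivable

variable {Γ : CNF}

theorem of_reflTransGen {Δ : CNF} (h : ReflTransGen UnitStep Γ Δ) :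
    ∀ C ∈ Δ, UnitDerivable Γ C := by
  induction h with
  | refl => exact fun C hC => base hC
  | tail _ hstep ih =>
    obtain ⟨C, rfl, hC⟩ := hstep
    rintro E (hE | rfl)
    · exact ih E hE
    · rcases hC with ⟨l, hneg, hvar, hins⟩ | ⟨D, hD, hDE, hnt⟩
      · exact unit (ih _ hneg) (ih _ hins) hvar
      · exact weak (ih D hD) hDE hnt

/-- Starting from any `Δ ⊇ Γ` lets the two premises of a unit step be derived one after the
other. -/
theorem exists_reflTransGen {C : Clause} (h : UnitDerivable Γ C) {Δ : CNF} (hΔ : Γ ⊆ Δ) :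
    ∃ Δ', ReflTransGen UnitStep Δ Δ' ∧ C ∈ Δ' := by
  induction h generalizing Δ with
  | base hC => exact ⟨Δ, .refl, hΔ hC⟩
  | @unit l C _ _ hvar ih_neg ih_ins =>
    obtain ⟨Δ₁, hreach₁, hneg⟩ := ih_neg hΔ
    obtain ⟨Δ₂, hreach₂, hins⟩ := ih_ins (hΔ.trans (subset_of_reflTransGen_unitStep hreach₁))
    refine ⟨Δ₂ ∪ {C}, (hreach₁.trans hreach₂).tail ⟨C, rfl, .inl ⟨l, ?_, hvar, hins⟩⟩, .inr rfl⟩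
    exact subset_of_reflTransGen_unitStep hreach₂ hneg
  | @weak D C _ hDC hnt ih =>
    obtain ⟨Δ₁, hreach, hD⟩ := ih hΔ
    exact ⟨Δ₁ ∪ {C}, hreach.tail ⟨C, rfl, .inr ⟨D, hD, hDC, hnt⟩⟩, .inr rfl⟩

theorem upRefutes_iff : UPRefutes Γ ↔ UnitDerivable Γ ∅ := by
  rw [upRefutes_iff_exists_reflTransGen]
  constructor
  · rintro ⟨Δ, hreach, hΔ⟩
    exact of_reflTransGen hreach ∅ hΔ
  · exact fun h => h.exists_reflTransGen subset_rfl

end UnitDerivable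

theorem UnitDerivable.exists_subset_of_unit {Γ : CNF} {l : Lit} {C D₁ D₂ : Clause}
    (h₁ : UnitDerivable Γ D₁) (hD₁ : D₁ ⊆ {negLit l})
    (h₂ : UnitDerivable Γ D₂) (hD₂ : D₂ ⊆ insert l C) (hl : l.1 ∉ varsClause C) :
    ∃ D ⊆ C, UnitDerivable Γ D := by
  rcases Finset.subset_singleton_iff.mp hD₁ with rfl | rfl
  · exact ⟨∅, Finset.empty_subset C, h₁⟩
  by_cases hlD₂ : l ∈ D₂
  · have hsub : D₂.erase l ⊆ C := Finset.subset_insert_iff.mp hD₂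
    refine ⟨D₂.erase l, hsub, .unit h₁ (by rwa [Finset.insert_erase hlD₂]) fun hv => hl ?_⟩
    exact Finset.image_subset_image hsub hv
  · exact ⟨D₂, (Finset.subset_insert_iff_of_notMem hlD₂).mp hD₂, h₂⟩

section Restriction

variable {α : PAssign}

theorem restrictClause_subset (C : Clause) : restrictClause α C ⊆ C :=
  Finset.filter_subset _ _

theorem restrictClause_mono {C D : Clause} (h : C ⊆ D) :
    restrictClause α C ⊆ restrictClause α D :=
  Finset.filter_subset_filter _ h

theorem restrictClause_insert_subset (l : Lit) (C : Clause) :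
    restrictClause α (insert l C) ⊆ insert l (restrictClause α C) := by
  unfold restrictClause
  rw [Finset.filter_insert]
  split_ifs
  · exact subset_rfl
  · exact Finset.subset_insert _ _

theorem restrictClause_insert_of_eq {l : Lit} (C : Clause) (h : α l.1 = some (!l.2)) :
    restrictClause α (insert l C) = restrictClause α C := by
  simp [restrictClause, Finset.filter_insert, h]

theorem restrictClause_singleton_negLit_of_eq {l : Lit} (h : α l.1 = some l.2) :
    restrictClause α {negLit l} = ∅ := by
  simp [restrictClause, negLit, h]

theorem restrictClause_singleton_negLit_of_ne {l : Lit} (h : α l.1 ≠ some l.2) :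
    restrictClause α {negLit l} = {negLit l} := by
  simpa [restrictClause, negLit] using h

theorem psatClause'_singleton_negLit {l : Lit} :
    PSatClause' α {negLit l} ↔ α l.1 = some (!l.2) := by
  simp [PSatClause', negLit]

theorem psatClause'_insert {l : Lit} {C : Clause} :
    PSatClause' α (insert l C) ↔ α l.1 = some l.2 ∨ PSatClause' α C := by
  simp [PSatClause']

theorem PSatClause'.mono {C D : Clause} (h : PSatClause' α C) (hCD : C ⊆ D) :
    PSatClause' α D :=
  let ⟨l, hl, hsat⟩ := h
  ⟨l, hCD hl, hsat⟩

end Restriction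

theorem UnitDerivable.exists_subset_restrictClause {Γ : CNF} {L : Finset Lit} {α : PAssign}
    (hα : ∀ p ∈ L, α p.1 ≠ some p.2) {C : Clause}
    (h : UnitDerivable (Γ ∪ negUnits L) C) (hC : ¬ PSatClause' α C) :
    ∃ D ⊆ restrictClause α C,
      UnitDerivable (restrictCNF α Γ ∪ negUnits (L.filter fun p => α p.1 ≠ some (!p.2))) D := by
  induction h with
  | @base C hmem =>
    rcases hmem with hΓ | ⟨p, hp, rfl⟩
    · exact ⟨_, subset_rfl, .base (.inl ⟨C, hΓ, hC, rfl⟩)⟩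
    · have hp' : α p.1 ≠ some (!p.2) := mt psatClause'_singleton_negLit.mpr hC
      rw [restrictClause_singleton_negLit_of_ne (hα p hp)]
      exact ⟨_, subset_rfl, .base (.inr ⟨p, Finset.mem_filter.mpr ⟨hp, hp'⟩, rfl⟩)⟩
  | @unit l C _ _ hl ih_neg ih_ins =>
    by_cases hsat : α l.1 = some l.2
    · obtain ⟨D, hD, hder⟩ := ih_neg (mt psatClause'_singleton_negLit.mp (by simp [hsat]))
      rw [restrictClause_singleton_negLit_of_eq hsat, Finset.subset_empty] at hD
      exact ⟨D, hD ▸ Finset.empty_subset _, hder⟩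
    have hins : ¬ PSatClause' α (insert l C) := by
      rw [psatClause'_insert]
      exact not_or.mpr ⟨hsat, hC⟩
    obtain ⟨D₂, hD₂, hder₂⟩ := ih_ins hins
    by_cases hfalse : α l.1 = some (!l.2)
    · exact ⟨D₂, restrictClause_insert_of_eq C hfalse ▸ hD₂, hder₂⟩
    obtain ⟨D₁, hD₁, hder₁⟩ := ih_neg (mt psatClause'_singleton_negLit.mp hfalse)
    exact hder₁.exists_subset_of_unit (hD₁.trans (restrictClause_subset _)) hder₂
      (hD₂.trans (restrictClause_insert_subset l C))
      fun hv => hl (Finset.image_subset_image (restrictClause_subset C) hv)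
  | weak _ hDC _ ih =>
    obtain ⟨D', hD', hder⟩ := ih fun hsat => hC (hsat.mono hDC)
    exact ⟨D', hD'.trans (restrictClause_mono hDC), hder⟩

/-- unit propagation is preserved under restrictions. -/
theorem unitPropagation_restriction (Γ : CNF) (L : Finset Lit) (α : PAssign)
    (hα : ∀ p ∈ L, α p.1 ≠ some p.2)
    (h : UPRefutes (Γ ∪ negUnits L)) :
    UPRefutes (restrictCNF α Γ ∪ negUnits (L.filter fun p => α p.1 ≠ some (!p.2))) := by
  have hempty : ¬ PSatClause' α ∅ := fun ⟨_, hl, _⟩ => Finset.notMem_empty _ hl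
  obtain ⟨D, hD, hder⟩ :=
    (UnitDerivable.upRefutes_iff.mp h).exists_subset_restrictClause hα hempty
  rw [Finset.subset_empty.mp hD] at hder
  exact UnitDerivable.upRefutes_iff.mpr hder
end
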